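/- Let A be a reduced commutative Noetherian ring and M a finitely generated A-module such that for every maximal ideal m of A the fiber M ⊗_A A/m is a one-dimensional vector space over A/m. Then M is locally free of rank one over A (i.e., M is projective of constant rank 1). -/

import Mathlib

open scoped TensorProduct

/-- `M` is a finite projective `A`-module of constant rank `n`: it is projective and its
localisation at every prime has (free) rank `n`. -/
def IsProjOfRank (A : Type) [CommRing A] (M : Type) [AddCommGroup M] [Module A M]
    (n : ℕ) : Prop :=
  Module.Projective A M ∧
    ∀ p : PrimeSpectrum A,
      Module.finrank (Localization.AtPrime p.asIdeal)
        (LocalizedModule p.asIdeal.primeCompl M) = n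

/-!
At a maximal ideal `m`, Nakayama's lemma lifts a basis of the one-dimensional fiber to a
generator of `Mₘ`, so `Mₘ ≅ Aₘ ⧸ Ann(Mₘ)`. No fiber vanishes, so `Ann(M)` lies in every maximal
ideal, hence in the Jacobson radical, which in a reduced Jacobson ring is zero; as `M` is finite,
`Ann(Mₘ) = Ann(M)ₘ = 0` and `Mₘ ≅ Aₘ`. Finitely presented and free at every maximal ideal, `M` is
projective, and the rank of a flat module at a prime equals its rank at any maximal ideal above it.
-/

open TensorProduct Module

theorem IsJacobsonRing.eq_bot_of_le_isMaximal {A : Type*} [CommRing A] [IsJacobsonRing A]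
    [IsReduced A] {I : Ideal A} (h : ∀ m : Ideal A, m.IsMaximal → I ≤ m) : I = ⊥ := by
  have hjac : (⊥ : Ideal A).jacobson = ⊥ := by
    rw [← Ideal.radical_eq_jacobson, ← Ideal.zero_eq_bot, ← nilradical, nilradical_eq_zero]
  rw [eq_bot_iff, ← hjac]
  exact le_sInf fun m hm => h m hm.2

theorem LocalizedModule.annihilator_eq_bot_of_annihilator_eq_bot {R M : Type*} [CommRing R]
    [AddCommGroup M] [Module R M] [Module.Finite R M] (S : Submonoid R)
    (h : Module.annihilator R M = ⊥) :
    Module.annihilator (Localization S) (LocalizedModule S M) = ⊥ := by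
  rw [eq_bot_iff]
  intro c hc
  obtain ⟨⟨a, s⟩, rfl⟩ := IsLocalization.mk'_surjective S c
  have ha : algebraMap R (Localization S) a ∈ Module.annihilator _ (LocalizedModule S M) := by
    simpa [IsLocalization.mk'_spec] using Ideal.mul_mem_right (algebraMap R _ s) _ hc
  obtain ⟨u, hu⟩ := Module.Finite.exists_smul_of_comp_eq_of_isLocalizedModule S
    (LocalizedModule.mkLinearMap S M) (LinearMap.lsmul R M a) 0 <| by
      ext y
      simpa [algebraMap_smul] using Module.mem_annihilator.mp ha (LocalizedModule.mk y 1)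
  have hua : (u : R) * a = 0 := by
    rw [← Submodule.mem_bot R, ← h, Module.mem_annihilator]
    intro y
    simpa [mul_smul, Submonoid.smul_def] using LinearMap.congr_fun hu y
  rw [Submodule.mem_bot, IsLocalization.mk'_eq_zero_iff]
  exact ⟨u, hua⟩

theorem IsLocalRing.exists_span_singleton_eq_top_of_finrank_eq_one {R N : Type*} [CommRing R]
    [IsLocalRing R] [AddCommGroup N] [Module R N] [Module.Finite R N]
    (h : finrank (ResidueField R) (ResidueField R ⊗[R] N) = 1) :
    ∃ x : N, Submodule.span R {x} = ⊤ := by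
  let b := Module.finBasisOfFinrankEq _ _ h
  obtain ⟨x, hx⟩ := TensorProduct.mk_surjective R N _ IsLocalRing.residue_surjective (b 0)
  refine ⟨x, ?_⟩
  simpa using span_eq_top_of_tmul_eq_basis (fun _ : Fin 1 => x) b fun i => by
    rw [Subsingleton.elim i 0]
    exact hx

theorem Module.nonempty_linearEquiv_of_span_singleton_eq_top {R N : Type*} [CommRing R]
    [AddCommGroup N] [Module R N] {x : N} (hx : Submodule.span R {x} = ⊤)
    (h : Module.annihilator R N = ⊥) : Nonempty (R ≃ₗ[R] N) := by
  refine ⟨.ofBijective (LinearMap.toSpanSingleton R N x) ⟨?_, ?_⟩⟩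
  · rw [← LinearMap.ker_eq_bot, eq_bot_iff, ← h, ← Submodule.annihilator_top, ← hx]
    intro c hc
    exact (Submodule.mem_annihilator_span_singleton x c).mpr hc
  · rw [← LinearMap.range_eq_top, ← LinearMap.span_singleton_eq_range, hx]

section LocalizationAtMaximal

variable {A M : Type*} [CommRing A] [AddCommGroup M] [Module A M]

theorem Ideal.finrank_residueField_tensor_localizedModule (m : Ideal A) [m.IsMaximal] :
    finrank m.ResidueField
        (m.ResidueField ⊗[Localization.AtPrime m] LocalizedModule m.primeCompl M) =
      finrank (A ⧸ m) ((A ⧸ m) ⊗[A] M) := by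
  let _ := Ideal.Quotient.field m
  calc _ = finrank m.ResidueField (m.Fiber M) :=
        ((LocalizedModule.equivTensorProduct m.primeCompl M).baseChange _ _ _ _ ≪≫ₗ
          AlgebraTensorModule.cancelBaseChange A _ _ _ M).finrank_eq
    _ = finrank m.ResidueField (m.ResidueField ⊗[A ⧸ m] ((A ⧸ m) ⊗[A] M)) :=
        (AlgebraTensorModule.cancelBaseChange A (A ⧸ m) _ _ M).finrank_eq.symm
    _ = _ := finrank_baseChange

theorem nonempty_linearEquiv_localizedModule_of_finrank_fiber_eq_one [IsReduced A]
    [IsJacobsonRing A] [Module.Finite A M]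
    (hfib : ∀ m : Ideal A, m.IsMaximal → finrank (A ⧸ m) ((A ⧸ m) ⊗[A] M) = 1)
    (m : Ideal A) [m.IsMaximal] :
    Nonempty (Localization.AtPrime m ≃ₗ[Localization.AtPrime m]
      LocalizedModule m.primeCompl M) := by
  have hloc (n : Ideal A) (hn : n.IsMaximal) : finrank n.ResidueField
      (n.ResidueField ⊗[Localization.AtPrime n] LocalizedModule n.primeCompl M) = 1 :=
    n.finrank_residueField_tensor_localizedModule.trans (hfib n hn)
  have hann : Module.annihilator A M = ⊥ := by
    refine IsJacobsonRing.eq_bot_of_le_isMaximal fun n hn => ?_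
    refine annihilator_le_of_mem_support (p := ⟨n, hn.isPrime⟩) (mem_support_iff.mpr ?_)
    rw [← not_subsingleton_iff_nontrivial]
    intro
    exact not_nontrivial _ (nontrivial_of_finrank_eq_succ (hloc n hn))
  obtain ⟨x, hx⟩ := IsLocalRing.exists_span_singleton_eq_top_of_finrank_eq_one (hloc m ‹_›)
  exact nonempty_linearEquiv_of_span_singleton_eq_top hx
    (LocalizedModule.annihilator_eq_bot_of_annihilator_eq_bot _ hann)

end LocalizationAtMaximal

/-- Let `A` be a reduced Noetherian Jacobson commutative ring and `M` a
finitely generated `A`-module whose fiber at every maximal ideal `m` is a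
one-dimensional `A/m`-vector space.  Then `M` is locally free of rank one over `A`. -/
theorem locally_free_rank_one_of_fibers_one_dimensional
    (A : Type) [CommRing A] [IsNoetherianRing A] [IsReduced A] [IsJacobsonRing A]
    (M : Type) [AddCommGroup M] [Module A M] [Module.Finite A M]
    (hfib : ∀ (m : Ideal A) (_ : m.IsMaximal),
      Module.finrank (A ⧸ m) ((A ⧸ m) ⊗[A] M) = 1) :
    IsProjOfRank A M 1 := by
  have hfree (m : Ideal A) (_ : m.IsMaximal) :
      Nonempty (Localization.AtPrime m ≃ₗ[_] LocalizedModule m.primeCompl M) :=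
    nonempty_linearEquiv_localizedModule_of_finrank_fiber_eq_one hfib m
  have : FinitePresentation A M := finitePresentation_of_finite A M
  have hproj : Projective A M := projective_of_localization_maximal fun m hm =>
    have := Free.of_equiv (hfree m hm).some
    inferInstance
  refine ⟨hproj, fun ⟨p, hp⟩ => ?_⟩
  obtain ⟨m, hm, hpm⟩ := p.exists_le_maximal hp.ne_top
  change rankAtStalk M ⟨p, hp⟩ = 1
  rw [rankAtStalk_eq_of_le_of_finite_of_flat' M hpm, rankAtStalk, ← (hfree m hm).some.finrank_eq,
    finrank_self]
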